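/- arXiv:1609.03000 — 4 statements merged into one kernel-verified Lean document; each statement's English description precedes it below -/
import Mathlib

section
/- Let T be a string of length n and let i be a position such that some SAGP w·g·u·uᴿ·wᴿ occurs in T with pivot i where u·uᴿ is the maximal even palindrome centered at i (a type-1 position). Then a SAGP w·g·u·uᴿ·wᴿ for pivot i is a canonical longest SAGP for pivot i if and only if u·uᴿ is the maximal even palindrome centered at i and wᴿ is the longest nonempty prefix of T[i+|u|+1..n] such that w occurs at least once in T[1..i−|u|−1]. -/
/-- 1-based substring T[b..e]. -/
def sub (T : List Char) (b e : ℕ) : List Char := (T.drop (b-1)).take (e+1-b)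

/-- The string x occurs in T beginning at 1-based position p. -/
def occursAt (T x : List Char) (p : ℕ) : Prop := x <+: T.drop (p-1)

/-- T has an even palindrome of radius r centered at position i (i.e. T[i-r+1..i+r] is a palindrome). -/
def evenPalAt (T : List Char) (i r : ℕ) : Prop :=
  r ≤ i ∧ i + r ≤ T.length ∧ (sub T (i-r+1) (i+r)).reverse = sub T (i-r+1) (i+r)

/-- The SAGP w·g·u·uᴿ·wᴿ (w, g, u nonempty) occurs in T with pivot i. -/
def SAGPat (T : List Char) (i : ℕ) (w g u : List Char) : Prop :=
  w ≠ [] ∧ g ≠ [] ∧ u ≠ [] ∧ ∃ b, 1 ≤ b ∧ b + (w.length + g.length + u.length) = i + 1 ∧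
    occursAt T (w ++ g ++ u ++ u.reverse ++ w.reverse) b

/-- w·g·u·uᴿ·wᴿ is a longest SAGP for pivot i (maximal arm length |wu|). -/
def longestSAGP (T : List Char) (i : ℕ) (w g u : List Char) : Prop :=
  SAGPat T i w g u ∧ ∀ w' g' u', SAGPat T i w' g' u' → w'.length + u'.length ≤ w.length + u.length

/-- w·g·u·uᴿ·wᴿ is a canonical longest SAGP for pivot i (moreover |u| maximal among longest). -/
def canonSAGP (T : List Char) (i : ℕ) (w g u : List Char) : Prop :=
  longestSAGP T i w g u ∧ ∀ w' g' u', longestSAGP T i w' g' u' → u'.length ≤ u.length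

/-- Position i is of type-1: some SAGP for pivot i has u·uᴿ equal to the maximal even palindrome centered at i. -/
def type1 (T : List Char) (i : ℕ) : Prop :=
  ∃ w g u, SAGPat T i w g u ∧ ∀ r, evenPalAt T i r → r ≤ u.length

/-!
A SAGP for pivot `i` amounts to an even palindrome of radius `r = |u|` centred at `i` together
with a right arm `wᴿ` (see `rightArmAt`). Dropping `d` letters from the front of a right arm
yields a right arm for radius `r + d`, so a SAGP of arm length `ℓ` can be re-centred, keeping `ℓ`,
on any even palindrome at `i` of radius below `ℓ`. At a type-1 position the maximal palindrome
has such a radius, so canonicity forces `u·uᴿ` to be maximal; once the centre is fixed,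
maximising `|wu|` means maximising `|wᴿ|`.
-/

theorem List.append_prefix_drop_iff {α : Type*} {x y l : List α} {m : ℕ} :
    x ++ y <+: l.drop m ↔ x <+: l.drop m ∧ y <+: l.drop (m + x.length) := by
  rw [← List.drop_drop]
  constructor
  · intro h
    exact ⟨(List.prefix_append x y).trans h, by simpa using h.drop x.length⟩
  · rintro ⟨hx, hy⟩
    rw [List.prefix_append_drop hx]
    exact (List.prefix_append_right_inj x).mpr hy

theorem List.reverse_eq_self_iff_of_length_eq_add {α : Type*} {L : List α} {r : ℕ}
    (hL : L.length = r + r) : L.reverse = L ↔ ∃ u, u.length = r ∧ L = u ++ u.reverse := by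
  constructor
  · intro h
    refine ⟨L.take r, by simp [hL], ?_⟩
    rw [List.reverse_take, h, hL, Nat.add_sub_cancel, List.take_append_drop]
  · rintro ⟨u, -, rfl⟩
    simp

theorem evenPalAt_iff {T : List Char} {i r : ℕ} (hri : r ≤ i) (hr : 0 < r) :
    evenPalAt T i r ↔ ∃ u, u.length = r ∧ u ++ u.reverse <+: T.drop (i - r) := by
  have hsub : sub T (i - r + 1) (i + r) = (T.drop (i - r)).take (r + r) := by
    unfold sub
    congr 2; omega
  simp only [evenPalAt, hsub, hri, true_and]
  constructor
  · rintro ⟨hlen, hpal⟩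
    obtain ⟨u, hu, hsplit⟩ :=
      (List.reverse_eq_self_iff_of_length_eq_add (r := r) (by simp; omega)).mp hpal
    exact ⟨u, hu, hsplit ▸ List.take_prefix _ _⟩
  · rintro ⟨u, rfl, hpre⟩
    have htake : (T.drop (i - u.length)).take (u.length + u.length) = u ++ u.reverse := by
      simpa using (List.prefix_iff_eq_take.mp hpre).symm
    have hlen := hpre.length_le
    simp only [List.length_append, List.length_reverse, List.length_drop] at hlen
    exact ⟨by omega, by rw [htake]; simp⟩

/-- `v` can serve as the right arm `wᴿ` of a SAGP for pivot `i` around a centre `u·uᴿ` of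
radius `r`: it starts right after the centre, and `vᴿ` ends at least one letter before it. -/
def rightArmAt (T : List Char) (i r : ℕ) (v : List Char) : Prop :=
  v ≠ [] ∧ v <+: T.drop (i + r) ∧
    ∃ p, 1 ≤ p ∧ p + v.length ≤ i - r ∧ occursAt T v.reverse p

theorem rightArmAt.drop {T v : List Char} {i r d : ℕ} (hv : rightArmAt T i r v)
    (hd : d < v.length) : rightArmAt T i (r + d) (v.drop d) := by
  obtain ⟨-, hpre, p, hp, hle, hocc⟩ := hv
  refine ⟨by simpa using hd, by simpa [Nat.add_assoc] using hpre.drop d, p, hp,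
    by simp; omega, ?_⟩
  rw [List.reverse_drop]
  exact (List.take_prefix _ _).trans hocc

namespace SAGPat

variable {T : List Char} {i : ℕ} {w g u : List Char}

theorem exists_occurrences (h : SAGPat T i w g u) :
    (∃ b, 1 ≤ b ∧ b + w.length ≤ i - u.length ∧ occursAt T w b) ∧
      u ++ u.reverse <+: T.drop (i - u.length) ∧ w.reverse <+: T.drop (i + u.length) := by
  obtain ⟨-, hg, -, b, hb, hpos, hocc⟩ := h
  have hg : 0 < g.length := List.length_pos_iff.mpr hg
  set c := u ++ u.reverse with hc
  have hocc' : w ++ (g ++ (c ++ w.reverse)) <+: T.drop (b - 1) := by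
    simpa [occursAt, hc, List.append_assoc] using hocc
  simp only [List.append_prefix_drop_iff] at hocc'
  obtain ⟨hw, -, hu, hwr⟩ := hocc'
  refine ⟨⟨b, hb, by omega, hw⟩, ?_, ?_⟩
  · convert hu using 2; omega
  · convert hwr using 2; simp [hc]; omega

theorem evenPalAt (h : SAGPat T i w g u) : _root_.evenPalAt T i u.length := by
  obtain ⟨⟨b, hb, hle, -⟩, hu, -⟩ := h.exists_occurrences
  exact (evenPalAt_iff (by omega) (List.length_pos_iff.mpr h.2.2.1)).mpr ⟨u, rfl, hu⟩

theorem rightArmAt (h : SAGPat T i w g u) : _root_.rightArmAt T i u.length w.reverse := by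
  obtain ⟨⟨b, hb, hle, hw⟩, -, hwr⟩ := h.exists_occurrences
  exact ⟨by simpa using h.1, hwr, b, hb, by simpa using hle, by simpa using hw⟩

end SAGPat

theorem exists_SAGPat_of_rightArmAt {T v : List Char} {i r : ℕ} (hpal : evenPalAt T i r)
    (hr : 0 < r) (hv : rightArmAt T i r v) :
    ∃ g u, u.length = r ∧ SAGPat T i v.reverse g u := by
  obtain ⟨hv, hvpre, p, hp, hle, hocc⟩ := hv
  obtain ⟨u, rfl, hu⟩ := (evenPalAt_iff hpal.1 hr).mp hpal
  -- the gap fills the letters strictly between the occurrence of `vᴿ` and the centre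
  obtain ⟨g, hgpre, hg⟩ : ∃ g, g <+: T.drop (p - 1 + v.length) ∧
      g.length = i - u.length - (p - 1 + v.length) :=
    ⟨(T.drop _).take (i - u.length - (p - 1 + v.length)), List.take_prefix _ _,
      by have := hpal.2.1; simp; omega⟩
  refine ⟨g, u, rfl, by simpa using hv, List.ne_nil_of_length_pos (by omega),
    List.ne_nil_of_length_pos hr, p, hp, by rw [List.length_reverse, hg]; omega, ?_⟩
  set c := u ++ u.reverse with hc
  have hocc' : v.reverse ++ (g ++ (c ++ v)) <+: T.drop (p - 1) := by
    simp only [List.append_prefix_drop_iff, List.length_reverse]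
    refine ⟨hocc, hgpre, ?_, ?_⟩
    · convert hu using 2; omega
    · convert hvpre using 2; simp [hc]; omega
  simpa [occursAt, hc, List.append_assoc] using hocc'

theorem exists_SAGPat_recentre {T w g u : List Char} {i r : ℕ} (hs : SAGPat T i w g u)
    (hpal : evenPalAt T i r) (hur : u.length ≤ r) (hr : r < w.length + u.length) :
    ∃ w' g' u', SAGPat T i w' g' u' ∧ u'.length = r ∧
      w'.length + u'.length = w.length + u.length := by
  have hu : 0 < u.length := List.length_pos_iff.mpr hs.2.2.1
  have harm := hs.rightArmAt.drop (d := r - u.length) (by simp; omega)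
  rw [Nat.add_sub_cancel' hur] at harm
  obtain ⟨g', u', hu', hs'⟩ := exists_SAGPat_of_rightArmAt hpal (by omega) harm
  exact ⟨_, g', u', hs', hu', by simp; omega⟩

theorem longestSAGP.length_le_of_rightArmAt {T w g u v : List Char} {i : ℕ}
    (hl : longestSAGP T i w g u) (hv : rightArmAt T i u.length v) : v.length ≤ w.length := by
  obtain ⟨g', u', hu', hs'⟩ :=
    exists_SAGPat_of_rightArmAt hl.1.evenPalAt (List.length_pos_iff.mpr hl.1.2.2.1) hv
  have := hl.2 _ g' u' hs'
  simp only [List.length_reverse, hu'] at this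
  omega

theorem canonSAGP.radius_maximal {T w g u : List Char} {i : ℕ} (h1 : type1 T i)
    (hc : canonSAGP T i w g u) : ∀ r, evenPalAt T i r → r ≤ u.length := by
  obtain ⟨w₀, g₀, u₀, hs₀, hmax₀⟩ := h1
  suffices u₀.length ≤ u.length from fun r hr => (hmax₀ r hr).trans this
  by_contra! hlt
  have hw₀ : 0 < w₀.length := List.length_pos_iff.mpr hs₀.1
  have harm := hc.1.2 w₀ g₀ u₀ hs₀
  obtain ⟨w', g', u', hs', hu', harm'⟩ :=
    exists_SAGPat_recentre hc.1.1 hs₀.evenPalAt hlt.le (by omega)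
  have := hc.2 w' g' u' ⟨hs', fun w'' g'' u'' hs'' => harm' ▸ hc.1.2 w'' g'' u'' hs''⟩
  omega

theorem longestSAGP_of_maximal {T w g u : List Char} {i : ℕ} (hs : SAGPat T i w g u)
    (hR : ∀ r, evenPalAt T i r → r ≤ u.length)
    (hmax : ∀ v, rightArmAt T i u.length v → v.length ≤ w.length) :
    longestSAGP T i w g u := by
  refine ⟨hs, fun w' g' u' hs' => ?_⟩
  have hu' := hR _ hs'.evenPalAt
  by_cases hshort : w'.length + u'.length ≤ u.length
  · omega
  · have harm := hs'.rightArmAt.drop (d := u.length - u'.length) (by simp; omega)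
    rw [Nat.add_sub_cancel' hu'] at harm
    have := hmax _ harm
    simp only [List.length_drop, List.length_reverse] at this
    omega

theorem canonical_longest_SAGP_iff_general (T : List Char) (i : ℕ)
    (h1 : type1 T i) (w g u : List Char) (hs : SAGPat T i w g u) :
    canonSAGP T i w g u ↔
      ((∀ r, evenPalAt T i r → r ≤ u.length) ∧
       w.reverse ≠ [] ∧ w.reverse <+: T.drop (i + u.length) ∧
       (∃ p, 1 ≤ p ∧ p + w.length ≤ i - u.length ∧ occursAt T w p) ∧
       (∀ v : List Char, v ≠ [] → v <+: T.drop (i + u.length) →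
          (∃ p, 1 ≤ p ∧ p + v.length ≤ i - u.length ∧ occursAt T v.reverse p) →
          v.length ≤ w.length)) := by
  have harm : rightArmAt T i u.length w.reverse := hs.rightArmAt
  simp only [rightArmAt, List.length_reverse, List.reverse_reverse] at harm
  constructor
  · intro hc
    exact ⟨hc.radius_maximal h1, harm.1, harm.2.1, harm.2.2, fun v hv hpre hocc =>
      hc.1.length_le_of_rightArmAt ⟨hv, hpre, hocc⟩⟩
  · rintro ⟨hR, -, -, -, hmax⟩
    refine ⟨longestSAGP_of_maximal hs hR fun v ⟨hv, hpre, hocc⟩ => hmax v hv hpre hocc,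
      fun w' g' u' hl' => hR _ hl'.1.evenPalAt⟩

/-- characterization of canonical longest SAGPs at a type-1 position. -/
theorem canonical_longest_SAGP_iff (T : List Char) (n i : ℕ) (hn : n = T.length)
    (h1 : type1 T i) (w g u : List Char) (hs : SAGPat T i w g u) :
    canonSAGP T i w g u ↔
      ((∀ r, evenPalAt T i r → r ≤ u.length) ∧
       w.reverse ≠ [] ∧ w.reverse <+: T.drop (i + u.length) ∧
       (∃ p, 1 ≤ p ∧ p + w.length ≤ i - u.length ∧ occursAt T w p) ∧
       (∀ v : List Char, v ≠ [] → v <+: T.drop (i + u.length) →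
          (∃ p, 1 ≤ p ∧ p + v.length ≤ i - u.length ∧ occursAt T v.reverse p) →
          v.length ≤ w.length)) :=
  canonical_longest_SAGP_iff_general T i h1 w g u hs
end

section
/- Let i be a type-2 position of a string T. If w·g·u·uᴿ·wᴿ is a canonical longest SAGP for pivot i, then |w| = 1. -/
lemma occursAt.getElem?_eq {T x : List Char} {p : ℕ} (h : occursAt T x p) {k : ℕ}
    (hk : k < x.length) : T[p - 1 + k]? = x[k]? := by
  obtain ⟨t, ht⟩ := h
  rw [← List.getElem?_drop, ← ht, List.getElem?_append_left hk]

lemma evenPalAt.getElem?_eq {T : List Char} {i r k : ℕ} (h : evenPalAt T i r) (hk : k < r) :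
    T[i - 1 - k]? = T[i + k]? := by
  obtain ⟨hri, hrT, hpal⟩ := h
  set S := sub T (i - r + 1) (i + r)
  have hS : ∀ j < 2 * r, S[j]? = T[i - r + j]? := fun j hj => by
    simp only [S, sub, List.getElem?_take, List.getElem?_drop]
    rw [if_pos (by omega)]
    congr 1
  have hSlen : S.length = 2 * r := by
    simp only [S, sub, List.length_take, List.length_drop]
    omega
  have hmirror : S[r - 1 - k]? = S[r + k]? :=
    calc S[r - 1 - k]? = S.reverse[r + k]? := by
          rw [List.getElem?_reverse (by omega), hSlen]
          congr 1
          omega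
      _ = S[r + k]? := by rw [hpal]
  rwa [hS _ (by omega), hS _ (by omega), show i - r + (r - 1 - k) = i - 1 - k by omega,
    show i - r + (r + k) = i + k by omega] at hmirror

section SAGP

variable {T : List Char} {i : ℕ} {w g u : List Char}

lemma SAGPat.getElem?_before_palindrome (h : SAGPat T i w g u) :
    T[i - 1 - u.length]? = g.getLast? := by
  obtain ⟨-, hg, -, b, hb, hbi, hocc⟩ := h
  have hglen : 0 < g.length := List.length_pos_iff.mpr hg
  have hocc' : occursAt T ((w ++ g) ++ (u ++ u.reverse ++ w.reverse)) b := by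
    simpa only [List.append_assoc] using hocc
  calc T[i - 1 - u.length]? = T[b - 1 + ((w ++ g).length - 1)]? := by
        congr 1
        simp only [List.length_append]
        omega
    _ = (w ++ g)[(w ++ g).length - 1]? := by
        rw [hocc'.getElem?_eq (by simp only [List.length_append]; omega),
          List.getElem?_append_left (by simp only [List.length_append]; omega)]
    _ = g.getLast? := by rw [← List.getLast?_eq_getElem?, List.getLast?_append_of_ne_nil _ hg]

lemma SAGPat.getElem?_after_palindrome (h : SAGPat T i w g u) :
    T[i + u.length]? = w.getLast? := by
  obtain ⟨hw, -, -, b, hb, hbi, hocc⟩ := h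
  have hwlen : 0 < w.length := List.length_pos_iff.mpr hw
  calc T[i + u.length]? = T[b - 1 + (w ++ g ++ u ++ u.reverse).length]? := by
        congr 1
        simp only [List.length_append, List.length_reverse]
        omega
    _ = w.reverse.head? := by
        rw [hocc.getElem?_eq (by simp only [List.length_append, List.length_reverse]; omega),
          List.getElem?_append_right le_rfl, Nat.sub_self, List.head?_eq_getElem?]
    _ = w.getLast? := List.head?_reverse

lemma SAGPat.getLast?_eq_of_not_type1 (h : SAGPat T i w g u) (h2 : ¬ type1 T i) :
    g.getLast? = w.getLast? := by
  simp only [type1, not_exists, not_and, not_forall, not_le] at h2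
  obtain ⟨r, hpal, hur⟩ := h2 w g u h
  rw [← h.getElem?_before_palindrome, ← h.getElem?_after_palindrome, hpal.getElem?_eq hur]

lemma SAGPat.shift {c : Char} (h : SAGPat T i (w ++ [c]) (g ++ [c]) u) (hw : w ≠ []) :
    SAGPat T i w (c :: g) (c :: u) := by
  obtain ⟨-, -, -, b, hb, hbi, hocc⟩ := h
  refine ⟨hw, List.cons_ne_nil _ _, List.cons_ne_nil _ _, b, hb, ?_, ?_⟩
  · simp only [List.length_append, List.length_cons, List.length_nil] at hbi ⊢
    omega
  · simpa [occursAt] using hocc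

lemma longestSAGP.of_length_eq {w' g' u' : List Char} (h : longestSAGP T i w g u)
    (h' : SAGPat T i w' g' u') (hlen : w'.length + u'.length = w.length + u.length) :
    longestSAGP T i w' g' u' :=
  ⟨h', fun w'' g'' u'' h'' => hlen ▸ h.2 w'' g'' u'' h''⟩

end SAGP

/-- at a type-2 position, any canonical longest SAGP has |w| = 1. -/
theorem type2_canonical_w_length_one (T : List Char) (i : ℕ) (h2 : ¬ type1 T i)
    (w g u : List Char) (h : canonSAGP T i w g u) : w.length = 1 := by
  obtain ⟨hlong, hcanon⟩ := h
  have hS := hlong.1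
  by_contra hw1
  obtain ⟨w', a, rfl⟩ := (List.eq_nil_or_concat' w).resolve_left hS.1
  obtain ⟨g', c, rfl⟩ := (List.eq_nil_or_concat' g).resolve_left hS.2.1
  have hca : c = a := by simpa using hS.getLast?_eq_of_not_type1 h2
  subst hca
  have hw' : w' ≠ [] := by rintro rfl; exact hw1 rfl
  have hlen : w'.length + (c :: u).length = (w' ++ [c]).length + u.length := by
    simp only [List.length_append, List.length_cons, List.length_nil]
    omega
  have hlong' := hlong.of_length_eq (hS.shift hw') hlen
  have := hcanon _ _ _ hlong'
  simp only [List.length_cons] at this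
  omega
end

section
/- Let i be a type-1 position of T and let u·uᴿ be the maximal even palindrome centered at i with i + |u| < n. Let W ≥ 1 be the length of the longest prefix wᴿ of T[i+|u|+1..n] such that w occurs in T[1..i−|u|−1]. Then the set of canonical longest SAGPs for pivot i is exactly { (i, W, b − p − 1, |u|) : 1 ≤ p, p + W − 1 ≤ b − 2, T[p..p+W−1] = w }, where b = i − |u| + 1; i.e., the canonical longest SAGPs for pivot i are in bijection with the occurrences of w ending before position b − 1. -/
lemma occ_split {T x y : List Char} {p : ℕ} (hp : 1 ≤ p) (h : occursAt T (x ++ y) p) :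
    occursAt T x p ∧ occursAt T y (p + x.length) := by
  obtain ⟨t, ht⟩ := h
  constructor
  · exact ⟨y ++ t, by rw [← ht]; simp⟩
  · refine ⟨t, ?_⟩
    have h1 : p + x.length - 1 = (p-1) + x.length := by omega
    rw [h1, ← List.drop_drop, ← ht]
    simp

lemma occ_glue {T x y : List Char} {p : ℕ} (hp : 1 ≤ p) (hx : occursAt T x p)
    (hy : occursAt T y (p + x.length)) : occursAt T (x ++ y) p := by
  obtain ⟨t, ht⟩ := hx
  have h1 : p + x.length - 1 = (p-1) + x.length := by omega
  rw [occursAt, h1, ← List.drop_drop, ← ht, List.drop_left] at hy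
  obtain ⟨s, hs⟩ := hy
  exact ⟨s, by rw [← ht, ← hs, List.append_assoc]⟩

lemma occ_take {T x : List Char} {p k : ℕ} (h : occursAt T x p) : occursAt T (x.take k) p :=
  (List.take_prefix k x).trans h

lemma occ_drop {T x : List Char} {p k : ℕ} (hp : 1 ≤ p) (h : occursAt T x p) :
    occursAt T (x.drop k) (p + k) := by
  rcases le_or_gt k x.length with hk | hk
  · have := (occ_split hp (x := x.take k) (y := x.drop k) (by rwa [List.take_append_drop])).2
    rwa [List.length_take, min_eq_left hk] at this
  · rw [List.drop_eq_nil_of_le (le_of_lt hk)]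
    exact List.nil_prefix

lemma occ_sub {T x : List Char} {p e : ℕ} (he : e + 1 - p = x.length) (h : occursAt T x p) :
    sub T p e = x := by
  rw [sub, he]; exact (List.prefix_iff_eq_take.mp h).symm

lemma sub_occ {T x : List Char} {p e : ℕ} (h : sub T p e = x) : occursAt T x p :=
  h ▸ List.take_prefix _ _

lemma occ_len {T x : List Char} {p : ℕ} (h : occursAt T x p) :
    x.length ≤ T.length - (p - 1) := by
  have := h.length_le; rwa [List.length_drop] at this

lemma SAGP_facts {T w' g' u' : List Char} {i : ℕ} (h : SAGPat T i w' g' u') :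
    ∃ b, 1 ≤ b ∧ b + (w'.length + g'.length + u'.length) = i + 1 ∧
      occursAt T w' b ∧ occursAt T g' (b + w'.length) ∧
      occursAt T u' (i + 1 - u'.length) ∧ occursAt T u'.reverse (i + 1) ∧
      occursAt T w'.reverse (i + u'.length + 1) := by
  obtain ⟨hw, hg, hu, b, hb1, hbeq, hocc⟩ := h
  rw [List.append_assoc, List.append_assoc, List.append_assoc] at hocc
  obtain ⟨h1, hocc⟩ := occ_split hb1 hocc
  obtain ⟨h2, hocc⟩ := occ_split (by omega) hocc
  obtain ⟨h3, hocc⟩ := occ_split (by omega) hocc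
  obtain ⟨h4, h5⟩ := occ_split (by omega) hocc
  have hu1 : 1 ≤ u'.length := List.length_pos_iff.mpr hu
  have hg1 : 1 ≤ g'.length := List.length_pos_iff.mpr hg
  have e3 : b + w'.length + g'.length = i + 1 - u'.length := by omega
  have e4 : b + w'.length + g'.length + u'.length = i + 1 := by omega
  have e5 : b + w'.length + g'.length + u'.length + u'.reverse.length = i + u'.length + 1 := by
    simp; omega
  rw [e3] at h3; rw [e4] at h4; rw [e5] at h5
  exact ⟨b, hb1, hbeq, h1, h2, h3, h4, h5⟩

lemma SAGP_evenPal {T w' g' u' : List Char} {i : ℕ} (h : SAGPat T i w' g' u') :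
    evenPalAt T i u'.length := by
  obtain ⟨b, hb1, hbeq, h1, h2, h3, h4, h5⟩ := SAGP_facts h
  obtain ⟨hw, hg, hu, _⟩ := h
  have hw1 : 1 ≤ w'.length := List.length_pos_iff.mpr hw
  have hg1 : 1 ≤ g'.length := List.length_pos_iff.mpr hg
  have hu1 : 1 ≤ u'.length := List.length_pos_iff.mpr hu
  have hui : u'.length ≤ i := by omega
  have hlen : w'.reverse.length ≤ T.length - (i + u'.length + 1 - 1) := occ_len h5
  rw [List.length_reverse] at hlen
  refine ⟨hui, by omega, ?_⟩
  have hglue : occursAt T (u' ++ u'.reverse) (i + 1 - u'.length) := by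
    refine occ_glue (by omega) h3 ?_
    have : i + 1 - u'.length + u'.length = i + 1 := by omega
    rwa [this]
  have hsub : sub T (i + 1 - u'.length) (i + u'.length) = u' ++ u'.reverse :=
    occ_sub (by simp; omega) hglue
  have he : i - u'.length + 1 = i + 1 - u'.length := by omega
  rw [he, hsub]
  simp

lemma armBound {T u w : List Char} {i : ℕ}
    (hmax : ∀ r, evenPalAt T i r → r ≤ u.length)
    (hwlong : ∀ v : List Char, v ≠ [] → v <+: T.drop (i + u.length) →
       (∃ p, 1 ≤ p ∧ p + v.length ≤ i - u.length ∧ occursAt T v.reverse p) →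
       v.length ≤ w.length) :
    ∀ w' g' u', SAGPat T i w' g' u' → w'.length + u'.length ≤ w.length + u.length := by
  intro w' g' u' h
  have hu' : u'.length ≤ u.length := hmax _ (SAGP_evenPal h)
  by_cases hc : w'.length + u'.length ≤ u.length
  · omega
  · obtain ⟨b, hb1, hbeq, h1, h2, h3, h4, h5⟩ := SAGP_facts h
    obtain ⟨hwne, hgne, hune, -⟩ := h
    have hg1 : 1 ≤ g'.length := List.length_pos_iff.mpr hgne
    set k := u.length - u'.length with hk
    set y := w'.reverse.drop k with hydef
    have hylen : y.length = w'.length - k := by simp [hydef]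
    have hyocc : occursAt T y (i + u'.length + 1 + k) := occ_drop (by omega) h5
    have hpos : i + u'.length + 1 + k = i + u.length + 1 := by omega
    rw [hpos] at hyocc
    have hypre : y <+: T.drop (i + u.length) := by
      have harith : i + u.length + 1 - 1 = i + u.length := by omega
      rwa [occursAt, harith] at hyocc
    have hyne : y ≠ [] := by
      intro hcon; rw [hcon] at hylen; simp at hylen; omega
    have hypref : y.reverse <+: w' := by
      have := List.reverse_prefix.mpr (List.drop_suffix k w'.reverse)
      rwa [List.reverse_reverse] at this
    have hYocc : occursAt T y.reverse b := hypref.trans h1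
    have hle : y.length ≤ w.length :=
      hwlong y hyne hypre ⟨b, hb1, by omega, hYocc⟩
    omega

lemma construct {T u w : List Char} {i : ℕ}
    (hu : evenPalAt T i u.length) (huocc : sub T (i - u.length + 1) i = u)
    (hw : w ≠ []) (hune : u ≠ [])
    (hwpre : w.reverse <+: T.drop (i + u.length))
    {e : ℕ} (he1 : w.length ≤ e) (he2 : e + 2 ≤ i - u.length + 1)
    (he3 : sub T (e - w.length + 1) e = w) :
    SAGPat T i w (sub T (e+1) (i - u.length)) u := by
  obtain ⟨hui, hiT, hpal⟩ := hu
  have hw1 : 1 ≤ w.length := List.length_pos_iff.mpr hw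
  have hu1 : 1 ≤ u.length := List.length_pos_iff.mpr hune
  set g := sub T (e+1) (i - u.length) with hgdef
  have hglen : g.length = i - u.length - e := by
    rw [hgdef, sub]
    simp only [List.length_take, List.length_drop]
    omega
  have hgne : g ≠ [] := by
    intro hcon; rw [hcon] at hglen; simp at hglen; omega
  have hOw : occursAt T w (e - w.length + 1) := sub_occ he3
  have hOg : occursAt T g (e+1) := sub_occ rfl
  have hOu : occursAt T u (i - u.length + 1) := sub_occ huocc
  -- the maximal palindrome gives u.reverse at i+1
  have hOur : occursAt T u.reverse (i + 1) := by
    set P := sub T (i - u.length + 1) (i + u.length) with hPdef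
    have hPlen : P.length = 2 * u.length := by
      rw [hPdef, sub]
      simp only [List.length_take, List.length_drop]
      omega
    have hP1 : P.take u.length = u := by
      have h2 : i + u.length + 1 - (i - u.length + 1) = 2 * u.length := by omega
      have h3 : i + 1 - (i - u.length + 1) = u.length := by omega
      rw [sub, h3] at huocc
      rw [hPdef, sub, h2, List.take_take, min_eq_left (by omega)]
      exact huocc
    set x := P.drop u.length with hxdef
    have hx : P = u ++ x := by rw [← hP1, hxdef]; exact (List.take_append_drop _ _).symm
    have hxlen : x.length = u.length := by rw [hxdef, List.length_drop, hPlen]; omega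
    rw [hx] at hpal
    rw [List.reverse_append] at hpal
    have hxr : x.reverse = u := by
      have := congrArg (List.take u.length) hpal
      rwa [List.take_left' (by simp [hxlen]), List.take_left' rfl] at this
    have hxu : x = u.reverse := by rw [← hxr, List.reverse_reverse]
    have hOP : occursAt T P (i - u.length + 1) := sub_occ hPdef.symm
    rw [hx, hxu] at hOP
    have := (occ_split (by omega) hOP).2
    have harith : i - u.length + 1 + u.length = i + 1 := by omega
    rwa [harith] at this
  have hOwr : occursAt T w.reverse (i + u.length + 1) := by
    rw [occursAt]
    have : i + u.length + 1 - 1 = i + u.length := by omega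
    rwa [this]
  -- glue everything
  have s1 : occursAt T (u.reverse ++ w.reverse) (i + 1) := by
    refine occ_glue (by omega) hOur ?_
    have : i + 1 + u.reverse.length = i + u.length + 1 := by simp; omega
    rwa [this]
  have s2 : occursAt T (u ++ (u.reverse ++ w.reverse)) (i - u.length + 1) := by
    refine occ_glue (by omega) hOu ?_
    have : i - u.length + 1 + u.length = i + 1 := by omega
    rwa [this]
  have s3 : occursAt T (g ++ (u ++ (u.reverse ++ w.reverse))) (e + 1) := by
    refine occ_glue (by omega) hOg ?_
    have : e + 1 + g.length = i - u.length + 1 := by omega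
    rwa [this]
  have s4 : occursAt T (w ++ (g ++ (u ++ (u.reverse ++ w.reverse)))) (e - w.length + 1) := by
    refine occ_glue (by omega) hOw ?_
    have : e - w.length + 1 + w.length = e + 1 := by omega
    rwa [this]
  refine ⟨hw, hgne, hune, e - w.length + 1, by omega, by omega, ?_⟩
  rw [List.append_assoc, List.append_assoc, List.append_assoc]
  exact s4

/-- at a type-1 position i (with b = i - |u| + 1), the canonical
longest SAGPs for pivot i are exactly the quadruples arising from the occurrences
of w ending at a position e ≤ b - 2, with gap T[e+1..b-1] of length b - e - 1. -/
theorem type1_canonical_SAGPs_characterized (T : List Char) (n i : ℕ) (hn : n = T.length)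
    (u w : List Char) (h1 : type1 T i)
    (hu : evenPalAt T i u.length) (huocc : sub T (i - u.length + 1) i = u)
    (hmax : ∀ r, evenPalAt T i r → r ≤ u.length)
    (hin : i + u.length < n)
    (hw : w ≠ []) (hwpre : w.reverse <+: T.drop (i + u.length))
    (hwocc : ∃ p, 1 ≤ p ∧ p + w.length ≤ i - u.length ∧ occursAt T w p)
    (hwlong : ∀ v : List Char, v ≠ [] → v <+: T.drop (i + u.length) →
       (∃ p, 1 ≤ p ∧ p + v.length ≤ i - u.length ∧ occursAt T v.reverse p) →
       v.length ≤ w.length) :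
    ∀ w' g' u', canonSAGP T i w' g' u' ↔
      (w' = w ∧ u' = u ∧ ∃ e, w.length ≤ e ∧ e + 2 ≤ i - u.length + 1 ∧
        sub T (e - w.length + 1) e = w ∧ g' = sub T (e + 1) (i - u.length)) := by
  have hw1 : 1 ≤ w.length := List.length_pos_iff.mpr hw
  have hui : u.length ≤ i := hu.1
  have hiT : i + u.length ≤ T.length := hu.2.1
  have hu1 : 1 ≤ u.length := by
    obtain ⟨w0, g0, u0, hs0, -⟩ := h1
    have h01 : 1 ≤ u0.length := List.length_pos_iff.mpr hs0.2.2.1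
    have := hmax _ (SAGP_evenPal hs0)
    omega
  have hune : u ≠ [] := by intro hcon; rw [hcon] at hu1; simp at hu1
  have arm := armBound (u := u) (w := w) hmax hwlong
  -- the candidate SAGP coming from hwocc
  obtain ⟨p, hp1, hp2, hpocc⟩ := hwocc
  have he3₀ : sub T (p + w.length - 1 - w.length + 1) (p + w.length - 1) = w := by
    have hsub := occ_sub (e := p + w.length - 1) (by omega) hpocc
    have harith : p + w.length - 1 - w.length + 1 = p := by omega
    rw [harith]; exact hsub
  have Csag : SAGPat T i w (sub T (p + w.length - 1 + 1) (i - u.length)) u :=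
    construct ⟨hui, hiT, hu.2.2⟩ huocc hw hune hwpre (by omega) (by omega) he3₀
  have Clong : longestSAGP T i w (sub T (p + w.length - 1 + 1) (i - u.length)) u := ⟨Csag, arm⟩
  intro w' g' u'
  constructor
  · rintro ⟨⟨hsag, hlmax⟩, hcmax⟩
    have hub : u'.length ≤ u.length := hmax _ (SAGP_evenPal hsag)
    have hge : w.length + u.length ≤ w'.length + u'.length := hlmax w _ u Csag
    have hle := arm w' g' u' hsag
    have huu : u.length ≤ u'.length := hcmax w _ u Clong
    have hulen : u'.length = u.length := le_antisymm hub huu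
    have hwlen : w'.length = w.length := by omega
    obtain ⟨b, hb1, hbeq, h1, h2, h3, h4, h5⟩ := SAGP_facts hsag
    have hg1 : 1 ≤ g'.length := List.length_pos_iff.mpr hsag.2.1
    have huu' : u' = u := by
      have hsu' := occ_sub (e := i) (by omega) h3
      have harith : i + 1 - u'.length = i - u.length + 1 := by omega
      rw [harith] at hsu'
      exact hsu'.symm.trans huocc
    have hww' : w' = w := by
      have hpre' : w'.reverse <+: T.drop (i + u.length) := by
        have harith : i + u'.length + 1 - 1 = i + u.length := by omega
        rwa [occursAt, harith] at h5
      have e1 := List.prefix_iff_eq_take.mp hpre'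
      have e2 := List.prefix_iff_eq_take.mp hwpre
      rw [List.length_reverse, hwlen] at e1
      rw [List.length_reverse] at e2
      exact List.reverse_injective (e1.trans e2.symm)
    refine ⟨hww', huu', b + w.length - 1, by omega, by omega, ?_, ?_⟩
    · rw [hww'] at h1
      have hsub := occ_sub (e := b + w.length - 1) (by omega) h1
      have harith : b + w.length - 1 - w.length + 1 = b := by omega
      rw [harith]; exact hsub
    · rw [hwlen] at h2
      have hsub := occ_sub (e := b + w.length + g'.length - 1) (by omega) h2
      have ha1 : b + w.length - 1 + 1 = b + w.length := by omega
      have ha2 : b + w.length + g'.length - 1 = i - u.length := by omega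
      rw [ha1, ← ha2]; exact hsub.symm
  · rintro ⟨rfl, rfl, e, he1, he2, he3, rfl⟩
    exact ⟨⟨construct ⟨hui, hiT, hu.2.2⟩ huocc hw hune hwpre he1 he2 he3, arm⟩,
      fun w'' g'' u'' hl => hmax _ (SAGP_evenPal hl.1)⟩
end

section
/- Let x = w·g·u·uᴿ·wᴿ be a SAGP occurring in T with pivot i, and let u' be a proper suffix of u. Suppose w'·g'·u'·u'ᴿ·w'ᴿ is also a SAGP for pivot i with |w'u'| > |wu|, where wᴿ is the longest prefix of T[i+|u|+1..n] whose reversal occurs in T[1..i−|u|−1] and u·uᴿ is the maximal even palindrome centered at i. Then a contradiction arises; formally: under these hypotheses, no such SAGP w'·g'·u'·u'ᴿ·w'ᴿ exists. Hence w·g·u·uᴿ·wᴿ is a longest SAGP for pivot i. -/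
/-- if u·uᴿ is the maximal even palindrome centered at i and wᴿ is the
longest prefix of T[i+|u|+1..n] whose reversal occurs in T[1..i-|u|-1], then no SAGP
for pivot i with palindrome part a proper suffix u' of u can have a longer arm. -/
theorem no_longer_arm_from_proper_suffix (T : List Char) (n i : ℕ) (hn : n = T.length)
    (w g u w' g' u' : List Char)
    (hs : SAGPat T i w g u)
    (hmaxpal : ∀ r, evenPalAt T i r → r ≤ u.length)
    (hwpre : w.reverse <+: T.drop (i + u.length))
    (hwlong : ∀ v : List Char, v ≠ [] → v <+: T.drop (i + u.length) →
       (∃ p, 1 ≤ p ∧ p + v.length ≤ i - u.length ∧ occursAt T v.reverse p) →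
       v.length ≤ w.length)
    (hsuf : u' <:+ u) (hne : u' ≠ u)
    (hs' : SAGPat T i w' g' u')
    (hlen : w.length + u.length < w'.length + u'.length) :
    False := by
  obtain ⟨hw, hg, hu, b, hb1, hbeq, hocc⟩ := hs
  obtain ⟨hw', hg', hu', b', hb1', hbeq', hocc'⟩ := hs'
  have hu'le : u'.length ≤ u.length := hsuf.length_le
  have hwpos : 1 ≤ w.length := List.length_pos_iff.mpr hw
  have hgpos : 1 ≤ g.length := List.length_pos_iff.mpr hg
  have hgpos' : 1 ≤ g'.length := List.length_pos_iff.mpr hg'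
  set k := u.length - u'.length with hk
  have hocc'' : (w' ++ g' ++ u' ++ u'.reverse ++ w'.reverse) <+: T.drop (b'-1) := hocc'
  -- w'.reverse is a prefix of T.drop (i + u'.length)
  have hdropS : ((w' ++ g' ++ u' ++ u'.reverse ++ w'.reverse)).drop
      (w' ++ g' ++ u' ++ u'.reverse).length = w'.reverse := by
    have : (w' ++ g' ++ u' ++ u'.reverse ++ w'.reverse) =
        (w' ++ g' ++ u' ++ u'.reverse) ++ w'.reverse := by simp [List.append_assoc]
    rw [this, List.drop_left]
  have h1 : w'.reverse <+: T.drop (i + u'.length) := by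
    have h := hocc''.drop (w' ++ g' ++ u' ++ u'.reverse).length
    rw [hdropS, List.drop_drop] at h
    have harith : (b'-1) + (w' ++ g' ++ u' ++ u'.reverse).length = i + u'.length := by
      simp only [List.length_append, List.length_reverse]; omega
    rwa [harith] at h
  -- the candidate v
  set v := w'.reverse.drop k with hv
  have hklt : k < w'.length := by omega
  have hvlen : v.length = w'.length - k := by simp [hv]
  have hvne : v ≠ [] := by
    intro h
    have := congrArg List.length h
    simp [hvlen] at this
    omega
  have hvpre : v <+: T.drop (i + u.length) := by
    have h := h1.drop k
    rw [List.drop_drop] at h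
    have : i + u'.length + k = i + u.length := by omega
    rwa [this] at h
  -- v.reverse is a prefix of w', which occurs at b'
  have hvrev : v.reverse = w'.take (w'.length - k) := by
    rw [hv, List.reverse_drop, List.reverse_reverse, List.length_reverse]
  have hoccv : occursAt T v.reverse b' := by
    show v.reverse <+: T.drop (b'-1)
    rw [hvrev]
    exact (List.take_prefix _ _).trans ((((List.prefix_append w' g').trans
      (List.prefix_append _ u')).trans (List.prefix_append _ u'.reverse)).trans
      ((List.prefix_append _ w'.reverse).trans hocc''))
  have hbound : b' + v.length ≤ i - u.length := by
    rw [hvlen]; omega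
  have := hwlong v hvne hvpre ⟨b', hb1', hbound, hoccv⟩
  rw [hvlen] at this
  omega
end
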